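/- arXiv:1808.09448 — 2 statements merged into one kernel-verified Lean document; each statement's English description precedes it below -/
import Mathlib

section
/- Let s ≥ 1. Suppose (q, p) and (q', p') are two solutions in ℝ^{2s} of the system ∑_{r=1}^s q_r p_r^{i-1} = a_i for i = 1,...,2s, where q_r, q'_r > 0 and both p₁ > p₂ > ... > p_s and p'₁ > p'₂ > ... > p'_s are strictly decreasing. Then (q, p) = (q', p'), i.e. q_r = q'_r and p_r = p'_r for all r. -/
/-!
Encode a solution `(q, p)` as the finitely supported measure `∑ r, q r • δ (p r)`. Two solutions
give measures whose difference lives on at most `2s` points and has vanishing moments of orders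
`0, …, 2s - 1`; a Vandermonde matrix on distinct nodes is invertible, so the difference is zero.
With nonzero weights and distinct nodes, this measure has mass `q r` at `p r` and support exactly
the set of nodes. Hence the two node sets coincide, so the strictly decreasing node sequences are
equal, and then so are the weights.
-/

open Finset Finsupp Matrix

noncomputable section

variable {R : Type*} [CommRing R]

theorem eq_zero_of_sum_mul_pow_eq_zero [IsDomain R] {ι : Type*} [Fintype ι] {v : ι → R}
    (hv : Function.Injective v) {c : ι → R} {n : ℕ} (hn : Fintype.card ι ≤ n)
    (h : ∀ j < n, ∑ i, c i * v i ^ j = 0) : c = 0 := by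
  let e := Fintype.equivFin ι
  have hvec : (c ∘ e.symm) ᵥ* vandermonde (v ∘ e.symm) = 0 := by
    funext j
    simp only [vecMul, dotProduct, vandermonde_apply, Function.comp_apply,
      Pi.zero_apply]
    rw [e.symm.sum_comp (fun i => c i * v i ^ (j : ℕ))]
    exact h j (j.2.trans_le hn)
  have hdet := det_vandermonde_ne_zero_iff.mpr (hv.comp e.symm.injective)
  funext i
  simpa using congrFun (eq_zero_of_vecMul_eq_zero hdet hvec) (e i)

def powerMoment (j : ℕ) : (R →₀ R) →ₗ[R] R := linearCombination R (· ^ j)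

theorem eq_zero_of_powerMoment_eq_zero [IsDomain R] {μ : R →₀ R} {n : ℕ} (hn : #μ.support ≤ n)
    (h : ∀ j < n, powerMoment j μ = 0) : μ = 0 := by
  have hzero : (fun x : μ.support => μ x) = 0 := by
    refine eq_zero_of_sum_mul_pow_eq_zero Subtype.val_injective (by simpa using hn)
      fun j hj => ?_
    rw [Finset.sum_coe_sort μ.support (fun x => μ x * x ^ j)]
    simpa [powerMoment, linearCombination_apply, Finsupp.sum] using h j hj
  ext x
  by_contra hx
  exact hx (congrFun hzero ⟨x, mem_support_iff.mpr hx⟩)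

section WeightedAtoms

variable {ι : Type*} [Fintype ι]

def weightedAtoms (q p : ι → R) : R →₀ R := ∑ r, single (p r) (q r)

theorem powerMoment_weightedAtoms (q p : ι → R) (j : ℕ) :
    powerMoment j (weightedAtoms q p) = ∑ r, q r * p r ^ j := by
  simp [powerMoment, weightedAtoms, linearCombination_single]

theorem card_support_weightedAtoms_le (q p : ι → R) :
    #(weightedAtoms q p).support ≤ Fintype.card ι := by
  classical
  have hsub : (weightedAtoms q p).support ⊆ univ.image p :=
    support_finsetSum.trans <| biUnion_subset.mpr fun r _ =>
      support_single_subset.trans <| singleton_subset_iff.mpr (mem_image_of_mem p (mem_univ r))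
  exact (card_le_card hsub).trans card_image_le

theorem weightedAtoms_apply_self {p : ι → R} (hp : Function.Injective p) (q : ι → R) (r : ι) :
    weightedAtoms q p (p r) = q r := by
  rw [weightedAtoms, finsetSum_apply,
    Finset.sum_eq_single r (fun r' _ hr' => single_eq_of_ne' (hp.ne hr')) (by simp),
    single_eq_same]

theorem weightedAtoms_apply_of_notMem {p : ι → R} {x : R} (hx : x ∉ Set.range p) (q : ι → R) :
    weightedAtoms q p x = 0 := by
  rw [weightedAtoms, finsetSum_apply]
  exact Finset.sum_eq_zero fun r _ => single_eq_of_ne' fun hr => hx ⟨r, hr⟩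

theorem support_weightedAtoms {q p : ι → R} (hp : Function.Injective p) (hq : ∀ r, q r ≠ 0) :
    ((weightedAtoms q p).support : Set R) = Set.range p := by
  ext x
  refine ⟨fun hx => ?_, ?_⟩
  · by_contra hxp
    exact mem_support_iff.mp hx (weightedAtoms_apply_of_notMem hxp q)
  · rintro ⟨r, rfl⟩
    simpa [weightedAtoms_apply_self hp] using hq r

theorem weightedAtoms_eq_of_sum_mul_pow_eq [IsDomain R] {κ : Type*} [Fintype κ]
    {q p : ι → R} {q' p' : κ → R}
    (h : ∀ j < Fintype.card ι + Fintype.card κ, ∑ r, q r * p r ^ j = ∑ r, q' r * p' r ^ j) :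
    weightedAtoms q p = weightedAtoms q' p' := by
  classical
  have hcard : #(weightedAtoms q p - weightedAtoms q' p').support
      ≤ Fintype.card ι + Fintype.card κ :=
    (card_le_card support_sub).trans <| (card_union_le _ _).trans <|
      add_le_add (card_support_weightedAtoms_le q p) (card_support_weightedAtoms_le q' p')
  refine sub_eq_zero.mp (eq_zero_of_powerMoment_eq_zero hcard fun j hj => ?_)
  rw [map_sub, powerMoment_weightedAtoms, powerMoment_weightedAtoms, h j hj, sub_self]

end WeightedAtoms

end

theorem ramanujan_system_unique_general (s : ℕ)
    (q p q' p' : Fin s → ℝ)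
    (hq : ∀ r, 0 < q r) (hq' : ∀ r, 0 < q' r)
    (hp : StrictAnti p) (hp' : StrictAnti p')
    (h : ∀ i : Fin (2 * s),
      ∑ r : Fin s, q r * p r ^ (i : ℕ) = ∑ r : Fin s, q' r * p' r ^ (i : ℕ)) :
    q = q' ∧ p = p' := by
  have hatoms : weightedAtoms q p = weightedAtoms q' p' :=
    weightedAtoms_eq_of_sum_mul_pow_eq fun j hj =>
      h ⟨j, by simpa [Fintype.card_fin, two_mul] using hj⟩
  have hpp : p = p' := by
    rw [← hp.range_inj hp', ← support_weightedAtoms hp.injective fun r => (hq r).ne',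
      ← support_weightedAtoms hp'.injective fun r => (hq' r).ne', hatoms]
  subst hpp
  refine ⟨funext fun r => ?_, rfl⟩
  calc q r = weightedAtoms q p (p r) := (weightedAtoms_apply_self hp.injective q r).symm
    _ = q' r := by rw [hatoms, weightedAtoms_apply_self hp.injective]

/-- Uniqueness of the solution of the Sylvester–Ramanujan power-sum system: if
(q,p) and (q',p') both satisfy ∑_r q_r p_r^{i-1} = a_i for i = 1,...,2s, with
positive weights and strictly decreasing nodes, then (q,p) = (q',p'). -/
theorem ramanujan_system_unique (s : ℕ) (hs : 1 ≤ s)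
    (q p q' p' : Fin s → ℝ)
    (hq : ∀ r, 0 < q r) (hq' : ∀ r, 0 < q' r)
    (hp : StrictAnti p) (hp' : StrictAnti p')
    (h : ∀ i : Fin (2 * s),
      ∑ r : Fin s, q r * p r ^ (i : ℕ) = ∑ r : Fin s, q' r * p' r ^ (i : ℕ)) :
    q = q' ∧ p = p' :=
  ramanujan_system_unique_general s q p q' p' hq hq' hp hp' h
end

section
/- Let q ∈ ℝ^s be nonincreasing (q₁ ≥ q₂ ≥ ... ≥ q_s), let x ∈ ℝ^s be arbitrary, and let x* be the isotonic regression of x, i.e. the unique minimizer of ∑_{r=1}^s (y_r - x_r)² over all nonincreasing vectors y ∈ ℝ^s. Then ∑_{r=1}^s |x*_r - q_r|^α ≤ ∑_{r=1}^s |x_r - q_r|^α for every α ≥ 1. -/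
/-!
Write `p` for the isotonic regression of `x`. Being the projection onto a convex cone, it satisfies
`∑ (x r - p r) (y r - p r) ≤ 0` for every nonincreasing `y`. For a convex `φ` with right derivative
`φ'`, put `w r = φ' (p r - q r)`. Since `q` is nonincreasing, `w` is nondecreasing on every block
where `p` is constant, so `p - t w` is still nonincreasing for small `t > 0`; taking `y = p - t w`
gives `∑ w r (x r - p r) ≥ 0`. Summing the subgradient inequalities
`φ (x r - q r) ≥ φ (p r - q r) + w r (x r - p r)` gives `∑ φ (p r - q r) ≤ ∑ φ (x r - q r)`,
and `φ = |·| ^ α` is convex for `α ≥ 1`.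
-/

open Set Filter Topology

lemma convexOn_abs_rpow {p : ℝ} (hp : 1 ≤ p) : ConvexOn ℝ univ fun x : ℝ ↦ |x| ^ p := by
  have himage : (|·|) '' (univ : Set ℝ) = Ici 0 := by
    ext y
    exact ⟨by rintro ⟨x, -, rfl⟩; exact abs_nonneg x, fun hy ↦ ⟨y, mem_univ y, abs_of_nonneg hy⟩⟩
  refine ConvexOn.comp (g := fun x : ℝ ↦ x ^ p) ?_ (convexOn_norm convex_univ) ?_
  · rw [himage]; exact convexOn_rpow hp
  · rw [himage]; exact fun a ha b _ hab ↦ Real.rpow_le_rpow ha hab (by linarith)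

namespace ConvexOn

variable {φ : ℝ → ℝ}

theorem add_rightDeriv_mul_sub_le (hφ : ConvexOn ℝ univ φ) (a b : ℝ) :
    φ b + derivWithin φ (Ioi b) b * (a - b) ≤ φ a := by
  have hb : b ∈ interior univ := by simp
  rcases lt_trichotomy a b with hab | rfl | hab
  · have hslope := (hφ.slope_le_leftDeriv_of_mem_interior (mem_univ a) hb hab).trans
      (hφ.leftDeriv_le_rightDeriv_of_mem_interior hb)
    rw [slope_def_field, div_le_iff₀ (sub_pos.2 hab)] at hslope
    nlinarith
  · simp
  · have hslope := hφ.rightDeriv_le_slope_of_mem_interior hb (mem_univ a) hab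
    rw [slope_def_field, le_div_iff₀ (sub_pos.2 hab)] at hslope
    linarith

theorem monotone_rightDeriv (hφ : ConvexOn ℝ univ φ) :
    Monotone fun b ↦ derivWithin φ (Ioi b) b := by
  simpa [monotoneOn_univ] using hφ.monotoneOn_rightDeriv

end ConvexOn

theorem convex_setOf_antitone {ι : Type*} [Preorder ι] : Convex ℝ {f : ι → ℝ | Antitone f} :=
  fun _ hf _ hg _ _ ha hb _ _ _ hij ↦
    add_le_add (mul_le_mul_of_nonneg_left (hf hij) ha) (mul_le_mul_of_nonneg_left (hg hij) hb)

theorem IsMinOn.sum_sub_mul_sub_nonpos {ι : Type*} [Fintype ι] {K : Set (ι → ℝ)}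
    {x p y : ι → ℝ} (hmin : IsMinOn (fun z ↦ ∑ i, (z i - x i) ^ 2) K p) (hK : Convex ℝ K)
    (hp : p ∈ K) (hy : y ∈ K) :
    ∑ i, (x i - p i) * (y i - p i) ≤ 0 := by
  set A := ∑ i, (x i - p i) * (y i - p i)
  set D := ∑ i, (y i - p i) ^ 2
  have hsmall : ∀ t ∈ Ioc (0 : ℝ) 1, 2 * A ≤ t * D := by
    rintro t ⟨ht₀, ht₁⟩
    have hexpand : ∑ i, (p i + t * (y i - p i) - x i) ^ 2
        = ∑ i, (p i - x i) ^ 2 + t ^ 2 * D - 2 * t * A := by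
      simp only [A, D, Finset.mul_sum, ← Finset.sum_add_distrib, ← Finset.sum_sub_distrib]
      exact Finset.sum_congr rfl fun i _ ↦ by ring
    have := isMinOn_iff.1 hmin _ (hK.add_smul_sub_mem hp hy ⟨ht₀.le, ht₁⟩)
    simp only [Pi.add_apply, Pi.smul_apply, Pi.sub_apply, smul_eq_mul, hexpand] at this
    nlinarith
  have hlim : Tendsto (fun t ↦ t * D) (𝓝[>] 0) (𝓝 0) :=
    ((continuous_mul_const D).tendsto' 0 0 (zero_mul D)).mono_left nhdsWithin_le_nhds
  linarith [ge_of_tendsto hlim (eventually_of_mem (Ioc_mem_nhdsGT one_pos) hsmall)]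

theorem exists_pos_antitone_sub_smul {ι : Type*} [Finite ι] [Preorder ι] {p w : ι → ℝ}
    (hp : Antitone p) (hw : ∀ ⦃i j⦄, i ≤ j → p i = p j → w i ≤ w j) :
    ∃ t : ℝ, 0 < t ∧ Antitone (p - t • w) := by
  have hpair : ∀ ij : ι × ι, ∀ᶠ t in 𝓝[>] (0 : ℝ),
      ij.1 ≤ ij.2 → p ij.2 - t * w ij.2 ≤ p ij.1 - t * w ij.1 := by
    rintro ⟨i, j⟩
    by_cases hij : i ≤ j
    · rcases (hp hij).eq_or_lt with heq | hlt
      · filter_upwards [self_mem_nhdsWithin] with t (ht : 0 < t) _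
        nlinarith [hw hij heq.symm]
      · have hcont : Tendsto (fun t ↦ p j - t * w j - (p i - t * w i)) (𝓝 0)
            (𝓝 (p j - p i)) :=
          Continuous.tendsto' (by fun_prop) 0 _ (by simp)
        filter_upwards [nhdsWithin_le_nhds (hcont.eventually (gt_mem_nhds (sub_neg.2 hlt)))]
          with t ht _
        linarith
    · exact Eventually.of_forall fun _ h ↦ absurd h hij
  obtain ⟨t, ht, ht₀⟩ := ((eventually_all.2 hpair).and self_mem_nhdsWithin).exists
  exact ⟨t, ht₀, fun i j hij ↦ ht (i, j) hij⟩

theorem IsMinOn.sum_comp_sub_le {ι : Type*} [Fintype ι] [Preorder ι] {x p q : ι → ℝ}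
    {φ : ℝ → ℝ} (hmin : IsMinOn (fun y ↦ ∑ i, (y i - x i) ^ 2) {y | Antitone y} p)
    (hp : Antitone p) (hq : Antitone q) (hφ : ConvexOn ℝ univ φ) :
    ∑ i, φ (p i - q i) ≤ ∑ i, φ (x i - q i) := by
  set w := fun i ↦ derivWithin φ (Ioi (p i - q i)) (p i - q i)
  obtain ⟨t, ht, hpt⟩ : ∃ t : ℝ, 0 < t ∧ Antitone (p - t • w) :=
    exists_pos_antitone_sub_smul hp fun i j hij heq ↦
      hφ.monotone_rightDeriv (by linarith [hq hij])
  have hw : 0 ≤ ∑ i, w i * (x i - p i) := by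
    have hvar := hmin.sum_sub_mul_sub_nonpos convex_setOf_antitone hp hpt
    have hdir : ∑ i, (x i - p i) * ((p - t • w) i - p i) = -(t * ∑ i, w i * (x i - p i)) := by
      rw [Finset.mul_sum, ← Finset.sum_neg_distrib]
      refine Finset.sum_congr rfl fun i _ ↦ ?_
      simp only [Pi.sub_apply, Pi.smul_apply, smul_eq_mul]
      ring
    rw [hdir, neg_nonpos] at hvar
    exact (mul_nonneg_iff_of_pos_left ht).1 hvar
  calc ∑ i, φ (p i - q i)
      ≤ ∑ i, φ (p i - q i) + ∑ i, w i * (x i - p i) := le_add_of_nonneg_right hw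
    _ = ∑ i, (φ (p i - q i) + w i * (x i - q i - (p i - q i))) := by
      simp only [sub_sub_sub_cancel_right, Finset.sum_add_distrib]
    _ ≤ ∑ i, φ (x i - q i) :=
      Finset.sum_le_sum fun i _ ↦ hφ.add_rightDeriv_mul_sub_le _ _

theorem isotonic_regression_error_reduction_general (s : ℕ)
    (q x xstar : Fin s → ℝ) (hq : Antitone q)
    (hstar_mono : Antitone xstar)
    (hstar_min : ∀ y : Fin s → ℝ, Antitone y →
      ∑ r : Fin s, (xstar r - x r) ^ 2 ≤ ∑ r : Fin s, (y r - x r) ^ 2) :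
    ∀ α : ℝ, 1 ≤ α →
      ∑ r : Fin s, |xstar r - q r| ^ α ≤ ∑ r : Fin s, |x r - q r| ^ α := fun _ hα ↦
  (isMinOn_iff.2 hstar_min).sum_comp_sub_le hstar_mono hq (convexOn_abs_rpow hα)

/-- Error reduction of isotonic regression: if x* is the ℓ² projection of x onto the
cone of nonincreasing vectors, and q is nonincreasing, then for every α ≥ 1,
∑ |x*_r - q_r|^α ≤ ∑ |x_r - q_r|^α. -/
theorem isotonic_regression_error_reduction (s : ℕ) (hs : 1 ≤ s)
    (q x xstar : Fin s → ℝ) (hq : Antitone q)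
    (hstar_mono : Antitone xstar)
    (hstar_min : ∀ y : Fin s → ℝ, Antitone y →
      ∑ r : Fin s, (xstar r - x r) ^ 2 ≤ ∑ r : Fin s, (y r - x r) ^ 2) :
    ∀ α : ℝ, 1 ≤ α →
      ∑ r : Fin s, |xstar r - q r| ^ α ≤ ∑ r : Fin s, |x r - q r| ^ α :=
  isotonic_regression_error_reduction_general s q x xstar hq hstar_mono hstar_min
end
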